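/- (Charging claim underlying Theorem 1) Let an MLAPD instance be given whose tree is increasing, i.e. c(par v) ≤ c(v) for every node v, and let D be its depth. Let OPT be any feasible schedule. Let ρ_1, …, ρ_m be requests with d(ρ_1) < d(ρ_2) < … < d(ρ_m) such that for each i, the request ρ_i is not satisfied by any of the services (P(v(ρ_1)), d(ρ_1)), …, (P(v(ρ_{i−1})), d(ρ_{i−1})). Then Σ_{i=1}^m Σ_{u ∈ P(v(ρ_i))} c(u) ≤ D · cost(OPT). -/
import Mathlib


open Classical

variable {V : Type} [Fintype V] [DecidableEq V] {Req : Type} [Fintype Req]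

/-- The root path of `v`: the set of nodes of the form `par^[n] v`, i.e. `v` and its ancestors. -/
noncomputable def rootPath (par : V → V) (v : V) : Finset V :=
  Finset.univ.filter (fun u => ∃ n : ℕ, par^[n] v = u)

/-- The level of a node: the cardinality of its root path (the root has level 1). -/
noncomputable def level (par : V → V) (v : V) : ℕ :=
  (rootPath par v).card

/-- The depth `D` of the instance: the maximum level over all nodes. -/
noncomputable def depth (par : V → V) : ℕ :=
  Finset.univ.sup (level par)

/-- A valid service tree: contains the root and is closed under the parent map. -/
def IsServiceTree (r : V) (par : V → V) (S : Finset V) : Prop :=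
  r ∈ S ∧ ∀ u ∈ S, par u ∈ S

/-- A service `(S, t)` satisfies a request `ρ` if the node of `ρ` lies in `S`
and `t` lies in the time window `[arr ρ, dl ρ]`. -/
def SatisfiedBy (node : Req → V) (arr dl : Req → ℝ) (S : Finset V) (t : ℝ) (ρ : Req) : Prop :=
  node ρ ∈ S ∧ arr ρ ≤ t ∧ t ≤ dl ρ

/-- The cost of a service subtree. -/
noncomputable def serviceCost (c : V → ℝ) (S : Finset V) : ℝ :=
  ∑ u ∈ S, c u

/-- The cost of a schedule: the sum of the costs of its services. -/
noncomputable def scheduleCost (c : V → ℝ) (sched : List (Finset V × ℝ)) : ℝ :=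
  (sched.map fun s => serviceCost c s.1).sum

/-- A schedule is feasible if each of its members is a valid service and every
request is satisfied by some service of the schedule. -/
def Feasible (r : V) (par : V → V) (node : Req → V) (arr dl : Req → ℝ)
    (sched : List (Finset V × ℝ)) : Prop :=
  (∀ s ∈ sched, IsServiceTree r par s.1) ∧
  ∀ ρ : Req, ∃ s ∈ sched, SatisfiedBy node arr dl s.1 s.2 ρ

lemma c_iterate_le (par : V → V) (c : V → ℝ) (hinc : ∀ v, c (par v) ≤ c v)
    (v : V) : ∀ n : ℕ, c (par^[n] v) ≤ c v := by
  intro n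
  induction n with
  | zero => simp
  | succ n ih =>
    rw [Function.iterate_succ_apply']
    exact (hinc _).trans ih

lemma self_mem_rootPath (par : V → V) (v : V) : v ∈ rootPath par v :=
  Finset.mem_filter.mpr ⟨Finset.mem_univ v, ⟨0, rfl⟩⟩

lemma rootPath_cost_le (par : V → V) (c : V → ℝ) (hc : ∀ v, 0 < c v)
    (hinc : ∀ v, c (par v) ≤ c v) (v : V) :
    ∑ u ∈ rootPath par v, c u ≤ (depth par : ℝ) * c v := by
  have h1 : ∑ u ∈ rootPath par v, c u ≤ ∑ _u ∈ rootPath par v, c v := by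
    apply Finset.sum_le_sum
    intro u hu
    obtain ⟨-, n, hn⟩ := Finset.mem_filter.mp hu
    exact hn ▸ c_iterate_le par c hinc v n
  have h2 : ∑ _u ∈ rootPath par v, c v = (level par v : ℝ) * c v := by
    rw [Finset.sum_const, level, nsmul_eq_mul]
  have h3 : (level par v : ℝ) ≤ (depth par : ℝ) :=
    Nat.cast_le.mpr (Finset.le_sup (Finset.mem_univ v))
  calc ∑ u ∈ rootPath par v, c u ≤ (level par v : ℝ) * c v := h1.trans_eq h2
    _ ≤ (depth par : ℝ) * c v := mul_le_mul_of_nonneg_right h3 (hc v).le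

lemma scheduleCost_eq_sum (c : V → ℝ) (l : List (Finset V × ℝ)) :
    scheduleCost c l = ∑ k : Fin l.length, serviceCost c (l.get k).1 := by
  unfold scheduleCost
  induction l with
  | nil => simp
  | cons s l ih => simp [Fin.sum_univ_succ, ih]

/-- **Charging claim underlying Theorem 1**: in an increasing tree, if requests
`ρ 0, …, ρ (m-1)` have strictly increasing deadlines and each `ρ i` is not satisfied
by any of the services `(P(v(ρ j)), d(ρ j))` for `j < i`, then the total cost of the
root paths of their nodes is at most `D` times the cost of any feasible schedule. -/
theorem charging_claim_increasing
    (r : V) (par : V → V) (c : V → ℝ) (node : Req → V) (arr dl : Req → ℝ)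
    (hroot : par r = r) (hreach : ∀ v : V, ∃ n : ℕ, par^[n] v = r)
    (hc : ∀ v, 0 < c v) (harr : ∀ ρ, arr ρ ≤ dl ρ) (hdl : Function.Injective dl)
    (hinc : ∀ v, c (par v) ≤ c v)
    (OPT : List (Finset V × ℝ)) (hOPT : Feasible r par node arr dl OPT)
    (m : ℕ) (ρ : Fin m → Req)
    (hmono : ∀ i j : Fin m, i < j → dl (ρ i) < dl (ρ j))
    (hunsat : ∀ i j : Fin m, j < i →
      ¬ SatisfiedBy node arr dl (rootPath par (node (ρ j))) (dl (ρ j)) (ρ i)) :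
    ∑ i : Fin m, ∑ u ∈ rootPath par (node (ρ i)), c u ≤
      (depth par : ℝ) * scheduleCost c OPT := by
  classical
  obtain ⟨hserv, hsat⟩ := hOPT
  have hchoice : ∀ i : Fin m, ∃ k : Fin OPT.length,
      SatisfiedBy node arr dl (OPT.get k).1 (OPT.get k).2 (ρ i) := by
    intro i
    obtain ⟨s, hs, hsat'⟩ := hsat (ρ i)
    obtain ⟨k, hk⟩ := List.mem_iff_get.mp hs
    exact ⟨k, hk ▸ hsat'⟩
  choose g hg using hchoice
  -- key: two requests charged to the same service have distinct nodes
  have key : ∀ i j : Fin m, i < j → g i = g j → node (ρ j) ≠ node (ρ i) := by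
    intro i j hij hgij heq
    apply hunsat j i hij
    refine ⟨heq ▸ self_mem_rootPath par (node (ρ j)), ?_, (hmono i j hij).le⟩
    have hi := hg i
    have hj := hg j
    rw [hgij] at hi
    exact hj.2.1.trans hi.2.2
  calc ∑ i : Fin m, ∑ u ∈ rootPath par (node (ρ i)), c u
      ≤ ∑ i : Fin m, (depth par : ℝ) * c (node (ρ i)) :=
        Finset.sum_le_sum fun i _ => rootPath_cost_le par c hc hinc _
    _ = (depth par : ℝ) * ∑ i : Fin m, c (node (ρ i)) := by rw [Finset.mul_sum]
    _ ≤ (depth par : ℝ) * scheduleCost c OPT := by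
        apply mul_le_mul_of_nonneg_left _ (Nat.cast_nonneg _)
        rw [scheduleCost_eq_sum]
        rw [← Finset.sum_fiberwise_of_maps_to (g := g) (t := Finset.univ)
          (fun i _ => Finset.mem_univ (g i)) (fun i => c (node (ρ i)))]
        apply Finset.sum_le_sum
        intro k _
        have hinj : Set.InjOn (fun i => node (ρ i))
            ↑(Finset.univ.filter (fun i => g i = k)) := by
          intro i hi j hj heq
          by_contra hne
          rcases lt_or_gt_of_ne hne with h | h
          · exact key i j h (by
              simp only [Finset.coe_filter, Set.mem_setOf_eq] at hi hj
              rw [hi.2, hj.2]) heq.symm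
          · exact key j i h (by
              simp only [Finset.coe_filter, Set.mem_setOf_eq] at hi hj
              rw [hi.2, hj.2]) heq
        rw [← Finset.sum_image (f := c) (fun i hi j hj h => hinj hi hj h)]
        apply Finset.sum_le_sum_of_subset_of_nonneg
        · intro u hu
          obtain ⟨i, hi, rfl⟩ := Finset.mem_image.mp hu
          have := (hg i).1
          rwa [(Finset.mem_filter.mp hi).2] at this
        · intro u _ _
          exact (hc u).le
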